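/- Let ρ be an X-type three-qubit state and τ²_{AB|C} = (1/3)ρ + (2/3)·(I₄/4 ⊗ Tr_{AB} ρ). Define P²_{a,−} = (9/4)ρ₄₄ρ₅₅ + (3/4)(ρ₁₁ρ₄₄+ρ₃₃ρ₄₄+ρ₄₄ρ₇₇+ρ₂₂ρ₅₅+ρ₅₅ρ₆₆+ρ₅₅ρ₈₈) + (1/4)(ρ₁₁ρ₂₂+ρ₁₁ρ₆₆+ρ₁₁ρ₈₈+ρ₂₂ρ₃₃+ρ₃₃ρ₆₆+ρ₃₃ρ₈₈+ρ₂₂ρ₇₇+ρ₆₆ρ₇₇+ρ₇₇ρ₈₈), P²_{a,+} = (9/4)ρ₃₃ρ₆₆ + (3/4)(ρ₂₂ρ₃₃+ρ₃₃ρ₄₄+ρ₃₃ρ₈₈+ρ₁₁ρ₆₆+ρ₅₅ρ₆₆+ρ₆₆ρ₇₇) + (1/4)(ρ₁₁ρ₂₂+ρ₁₁ρ₄₄+ρ₁₁ρ₈₈+ρ₂₂ρ₅₅+ρ₄₄ρ₅₅+ρ₅₅ρ₈₈+ρ₂₂ρ₇₇+ρ₄₄ρ₇₇+ρ₇₇ρ₈₈),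 P²_{b,−} = (9/4)ρ₂₂ρ₇₇ + (3/4)(ρ₁₁ρ₂₂+ρ₂₂ρ₃₃+ρ₂₂ρ₅₅+ρ₄₄ρ₇₇+ρ₆₆ρ₇₇+ρ₇₇ρ₈₈) + (1/4)(ρ₁₁ρ₄₄+ρ₁₁ρ₆₆+ρ₁₁ρ₈₈+ρ₃₃ρ₄₄+ρ₃₃ρ₆₆+ρ₃₃ρ₈₈+ρ₄₄ρ₅₅+ρ₅₅ρ₆₆+ρ₅₅ρ₈₈), P²_{b,+} = (9/4)ρ₁₁ρ₈₈ + (3/4)(ρ₁₁ρ₂₂+ρ₁₁ρ₄₄+ρ₁₁ρ₆₆+ρ₃₃ρ₈₈+ρ₅₅ρ₈₈+ρ₇₇ρ₈₈) + (1/4)(ρ₂₂ρ₃₃+ρ₃₃ρ₄₄+ρ₃₃ρ₆₆+ρ₂₂ρ₅₅+ρ₄₄ρ₅₅+ρ₅₅ρ₆₆+ρ₂₂ρ₇₇+ρ₄₄ρ₇₇+ρ₆₆ρ₇₇). If |ρ₁₈|² > P²_{a,−}, or |ρ₂₇|² > P²_{a,+}, or |ρ₃₆|² > P²_{b,−}, or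 |ρ₄₅|² > P²_{b,+}, then the partial transpose of τ²_{AB|C} over the first qubit is not positive semidefinite (so τ²_{AB|C} is entangled). -/

import Mathlib

open scoped ComplexOrder

/-- Index type for three qubits: `(i, j, k)` with `m - 1 = 4i + 2j + k`. -/
abbrev Q3 : Type := Fin 2 × Fin 2 × Fin 2

/-- Partial transpose over the first qubit:
`(M^{T₁})_{(i,j,k),(i',j',k')} = M_{(i',j,k),(i,j',k')}`. -/
def ptA (M : Matrix Q3 Q3 ℂ) : Matrix Q3 Q3 ℂ :=
  Matrix.of fun p q : Q3 => M (q.1, p.2.1, p.2.2) (p.1, q.2.1, q.2.2)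

/-- An X-type three-qubit state: positive semidefinite (hence Hermitian), trace one,
and the only possibly nonzero entries are on the diagonal and the anti-diagonal. -/
def IsXType (ρ : Matrix Q3 Q3 ℂ) : Prop :=
  ρ.PosSemidef ∧ ρ.trace = 1 ∧
    ∀ p q : Q3, q ≠ p → q ≠ (1 - p.1, 1 - p.2.1, 1 - p.2.2) → ρ p q = 0

/-- The steered matrix `τ² = (1/3) M + (2/3) (I₄/4 ⊗ Tr₁₂ M)`,
where `Tr₁₂` traces out the first two qubits. -/
noncomputable def tauTwo (M : Matrix Q3 Q3 ℂ) : Matrix Q3 Q3 ℂ :=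
  (1/3 : ℂ) • M +
    (2/3 : ℂ) • Matrix.of (fun p q : Q3 =>
      (if p.1 = q.1 ∧ p.2.1 = q.2.1 then (1/4 : ℂ) else 0) *
        ∑ i : Fin 2, ∑ j : Fin 2, M (i, j, p.2.2) (i, j, q.2.2))


lemma psd_det_nonneg_aux {n : Type*} [Fintype n] [DecidableEq n] {H : Matrix n n ℂ}
    (h : H.PosSemidef) : (0:ℂ) ≤ H.det := by
  rw [h.isHermitian.det_eq_prod_eigenvalues]
  have h0 : (0:ℝ) ≤ ∏ i, h.isHermitian.eigenvalues i :=
    Finset.prod_nonneg fun i _ => h.eigenvalues_nonneg i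
  calc (0:ℂ) ≤ ((∏ i, h.isHermitian.eigenvalues i : ℝ) : ℂ) := Complex.zero_le_real.mpr h0
    _ = _ := by push_cast; rfl

lemma psd_entry_sq_le {n : Type*} [Fintype n] [DecidableEq n] {H : Matrix n n ℂ}
    (h : H.PosSemidef) (p q : n) :
    ‖H p q‖ ^ 2 ≤ (H p p).re * (H q q).re := by
  have hS : ((H.submatrix ![p,q] ![p,q])).PosSemidef := h.submatrix _
  have hd := psd_det_nonneg_aux hS
  rw [Matrix.det_fin_two] at hd
  simp only [Matrix.submatrix_apply, Matrix.cons_val_zero, Matrix.cons_val_one,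
    Matrix.head_cons] at hd
  have hqp : H q p = (starRingEnd ℂ) (H p q) := by
    have := congrFun (congrFun h.isHermitian q) p
    simpa [Matrix.conjTranspose_apply] using this.symm
  rw [hqp, Complex.mul_conj] at hd
  have him : (H p p).im = 0 := by
    have := congrFun (congrFun h.isHermitian p) p
    simp [Matrix.conjTranspose_apply, Complex.ext_iff] at this
    linarith [this]
  have hre := (Complex.le_def.mp hd).1
  simp [Complex.sub_re, Complex.mul_re, him, Complex.sq_norm, Complex.normSq] at hre ⊢
  nlinarith [hre]

set_option maxHeartbeats 1600000 in
/-- entanglement (NPT) criterion for `τ²_{AB|C}`, witnessing steering from Alice and Bob to Charlie. -/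
theorem tauTwo_ABC_npt (ρ : Matrix Q3 Q3 ℂ) (hX : IsXType ρ)
    (r11 r22 r33 r44 r55 r66 r77 r88 c18 c27 c36 c45 : ℝ)
    (hr11 : r11 = (ρ (0,0,0) (0,0,0)).re)
    (hr22 : r22 = (ρ (0,0,1) (0,0,1)).re)
    (hr33 : r33 = (ρ (0,1,0) (0,1,0)).re)
    (hr44 : r44 = (ρ (0,1,1) (0,1,1)).re)
    (hr55 : r55 = (ρ (1,0,0) (1,0,0)).re)
    (hr66 : r66 = (ρ (1,0,1) (1,0,1)).re)
    (hr77 : r77 = (ρ (1,1,0) (1,1,0)).re)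
    (hr88 : r88 = (ρ (1,1,1) (1,1,1)).re)
    (hc18 : c18 = ‖ρ (0,0,0) (1,1,1)‖)
    (hc27 : c27 = ‖ρ (0,0,1) (1,1,0)‖)
    (hc36 : c36 = ‖ρ (0,1,0) (1,0,1)‖)
    (hc45 : c45 = ‖ρ (0,1,1) (1,0,0)‖)
    (P2am P2ap P2bm P2bp : ℝ)
    (hP2am : P2am = 9/4 * (r44 * r55) + 3/4 * (r11 * r44 + r33 * r44 + r44 * r77 + r22 * r55 + r55 * r66 + r55 * r88) +
        1/4 * (r11 * r22 + r11 * r66 + r11 * r88 + r22 * r33 + r33 * r66 + r33 * r88 + r22 * r77 + r66 * r77 + r77 * r88))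
    (hP2ap : P2ap = 9/4 * (r33 * r66) + 3/4 * (r22 * r33 + r33 * r44 + r33 * r88 + r11 * r66 + r55 * r66 + r66 * r77) +
        1/4 * (r11 * r22 + r11 * r44 + r11 * r88 + r22 * r55 + r44 * r55 + r55 * r88 + r22 * r77 + r44 * r77 + r77 * r88))
    (hP2bm : P2bm = 9/4 * (r22 * r77) + 3/4 * (r11 * r22 + r22 * r33 + r22 * r55 + r44 * r77 + r66 * r77 + r77 * r88) +
        1/4 * (r11 * r44 + r11 * r66 + r11 * r88 + r33 * r44 + r33 * r66 + r33 * r88 + r44 * r55 + r55 * r66 + r55 * r88))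
    (hP2bp : P2bp = 9/4 * (r11 * r88) + 3/4 * (r11 * r22 + r11 * r44 + r11 * r66 + r33 * r88 + r55 * r88 + r77 * r88) +
        1/4 * (r22 * r33 + r33 * r44 + r33 * r66 + r22 * r55 + r44 * r55 + r55 * r66 + r22 * r77 + r44 * r77 + r66 * r77))
    (h : c18 ^ 2 > P2am ∨
         c27 ^ 2 > P2ap ∨
         c36 ^ 2 > P2bm ∨
         c45 ^ 2 > P2bp) :
    ¬ (ptA (tauTwo ρ)).PosSemidef := by
  intro hP
  subst hr11 hr22 hr33 hr44 hr55 hr66 hr77 hr88 hc18 hc27 hc36 hc45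
  subst hP2am hP2ap hP2bm hP2bp
  rcases h with h | h | h | h
  · have hdp : ((ptA (tauTwo ρ)) ((1:Fin 2),(0:Fin 2),(0:Fin 2)) (1,0,0)).re =
        1/3 * (ρ (1,0,0) (1,0,0)).re + 1/6*((ρ (0,0,0) (0,0,0)).re + (ρ (0,1,0) (0,1,0)).re + (ρ (1,0,0) (1,0,0)).re + (ρ (1,1,0) (1,1,0)).re) := by
      simp [ptA, tauTwo, Matrix.add_apply, Matrix.smul_apply, smul_eq_mul, Fin.sum_univ_two,
        Complex.add_re, Complex.mul_re, Complex.div_re, Complex.normSq]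
      ring
    have hdq : ((ptA (tauTwo ρ)) ((0:Fin 2),(1:Fin 2),(1:Fin 2)) (0,1,1)).re =
        1/3 * (ρ (0,1,1) (0,1,1)).re + 1/6*((ρ (0,0,1) (0,0,1)).re + (ρ (0,1,1) (0,1,1)).re + (ρ (1,0,1) (1,0,1)).re + (ρ (1,1,1) (1,1,1)).re) := by
      simp [ptA, tauTwo, Matrix.add_apply, Matrix.smul_apply, smul_eq_mul, Fin.sum_univ_two,
        Complex.add_re, Complex.mul_re, Complex.div_re, Complex.normSq]
      ring
    have ha : (ptA (tauTwo ρ)) ((1:Fin 2),(0:Fin 2),(0:Fin 2)) (0,1,1) = (1/3:ℂ) * ρ (0,0,0) (1,1,1) := by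
      simp [ptA, tauTwo, Matrix.add_apply, Matrix.smul_apply, smul_eq_mul]
    have hk := psd_entry_sq_le hP ((1:Fin 2),(0:Fin 2),(0:Fin 2)) ((0:Fin 2),(1:Fin 2),(1:Fin 2))
    rw [ha, hdp, hdq, norm_mul] at hk
    have h3 : ‖(1/3:ℂ)‖ = 1/3 := by norm_num
    rw [h3] at hk
    nlinarith [hk]
  · have hdp : ((ptA (tauTwo ρ)) ((1:Fin 2),(0:Fin 2),(1:Fin 2)) (1,0,1)).re =
        1/3 * (ρ (1,0,1) (1,0,1)).re + 1/6*((ρ (0,0,1) (0,0,1)).re + (ρ (0,1,1) (0,1,1)).re + (ρ (1,0,1) (1,0,1)).re + (ρ (1,1,1) (1,1,1)).re) := by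
      simp [ptA, tauTwo, Matrix.add_apply, Matrix.smul_apply, smul_eq_mul, Fin.sum_univ_two,
        Complex.add_re, Complex.mul_re, Complex.div_re, Complex.normSq]
      ring
    have hdq : ((ptA (tauTwo ρ)) ((0:Fin 2),(1:Fin 2),(0:Fin 2)) (0,1,0)).re =
        1/3 * (ρ (0,1,0) (0,1,0)).re + 1/6*((ρ (0,0,0) (0,0,0)).re + (ρ (0,1,0) (0,1,0)).re + (ρ (1,0,0) (1,0,0)).re + (ρ (1,1,0) (1,1,0)).re) := by
      simp [ptA, tauTwo, Matrix.add_apply, Matrix.smul_apply, smul_eq_mul, Fin.sum_univ_two,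
        Complex.add_re, Complex.mul_re, Complex.div_re, Complex.normSq]
      ring
    have ha : (ptA (tauTwo ρ)) ((1:Fin 2),(0:Fin 2),(1:Fin 2)) (0,1,0) = (1/3:ℂ) * ρ (0,0,1) (1,1,0) := by
      simp [ptA, tauTwo, Matrix.add_apply, Matrix.smul_apply, smul_eq_mul]
    have hk := psd_entry_sq_le hP ((1:Fin 2),(0:Fin 2),(1:Fin 2)) ((0:Fin 2),(1:Fin 2),(0:Fin 2))
    rw [ha, hdp, hdq, norm_mul] at hk
    have h3 : ‖(1/3:ℂ)‖ = 1/3 := by norm_num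
    rw [h3] at hk
    nlinarith [hk]
  · have hdp : ((ptA (tauTwo ρ)) ((1:Fin 2),(1:Fin 2),(0:Fin 2)) (1,1,0)).re =
        1/3 * (ρ (1,1,0) (1,1,0)).re + 1/6*((ρ (0,0,0) (0,0,0)).re + (ρ (0,1,0) (0,1,0)).re + (ρ (1,0,0) (1,0,0)).re + (ρ (1,1,0) (1,1,0)).re) := by
      simp [ptA, tauTwo, Matrix.add_apply, Matrix.smul_apply, smul_eq_mul, Fin.sum_univ_two,
        Complex.add_re, Complex.mul_re, Complex.div_re, Complex.normSq]
      ring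
    have hdq : ((ptA (tauTwo ρ)) ((0:Fin 2),(0:Fin 2),(1:Fin 2)) (0,0,1)).re =
        1/3 * (ρ (0,0,1) (0,0,1)).re + 1/6*((ρ (0,0,1) (0,0,1)).re + (ρ (0,1,1) (0,1,1)).re + (ρ (1,0,1) (1,0,1)).re + (ρ (1,1,1) (1,1,1)).re) := by
      simp [ptA, tauTwo, Matrix.add_apply, Matrix.smul_apply, smul_eq_mul, Fin.sum_univ_two,
        Complex.add_re, Complex.mul_re, Complex.div_re, Complex.normSq]
      ring
    have ha : (ptA (tauTwo ρ)) ((1:Fin 2),(1:Fin 2),(0:Fin 2)) (0,0,1) = (1/3:ℂ) * ρ (0,1,0) (1,0,1) := by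
      simp [ptA, tauTwo, Matrix.add_apply, Matrix.smul_apply, smul_eq_mul]
    have hk := psd_entry_sq_le hP ((1:Fin 2),(1:Fin 2),(0:Fin 2)) ((0:Fin 2),(0:Fin 2),(1:Fin 2))
    rw [ha, hdp, hdq, norm_mul] at hk
    have h3 : ‖(1/3:ℂ)‖ = 1/3 := by norm_num
    rw [h3] at hk
    nlinarith [hk]
  · have hdp : ((ptA (tauTwo ρ)) ((1:Fin 2),(1:Fin 2),(1:Fin 2)) (1,1,1)).re =
        1/3 * (ρ (1,1,1) (1,1,1)).re + 1/6*((ρ (0,0,1) (0,0,1)).re + (ρ (0,1,1) (0,1,1)).re + (ρ (1,0,1) (1,0,1)).re + (ρ (1,1,1) (1,1,1)).re) := by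
      simp [ptA, tauTwo, Matrix.add_apply, Matrix.smul_apply, smul_eq_mul, Fin.sum_univ_two,
        Complex.add_re, Complex.mul_re, Complex.div_re, Complex.normSq]
      ring
    have hdq : ((ptA (tauTwo ρ)) ((0:Fin 2),(0:Fin 2),(0:Fin 2)) (0,0,0)).re =
        1/3 * (ρ (0,0,0) (0,0,0)).re + 1/6*((ρ (0,0,0) (0,0,0)).re + (ρ (0,1,0) (0,1,0)).re + (ρ (1,0,0) (1,0,0)).re + (ρ (1,1,0) (1,1,0)).re) := by
      simp [ptA, tauTwo, Matrix.add_apply, Matrix.smul_apply, smul_eq_mul, Fin.sum_univ_two,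
        Complex.add_re, Complex.mul_re, Complex.div_re, Complex.normSq]
      ring
    have ha : (ptA (tauTwo ρ)) ((1:Fin 2),(1:Fin 2),(1:Fin 2)) (0,0,0) = (1/3:ℂ) * ρ (0,1,1) (1,0,0) := by
      simp [ptA, tauTwo, Matrix.add_apply, Matrix.smul_apply, smul_eq_mul]
    have hk := psd_entry_sq_le hP ((1:Fin 2),(1:Fin 2),(1:Fin 2)) ((0:Fin 2),(0:Fin 2),(0:Fin 2))
    rw [ha, hdp, hdq, norm_mul] at hk
    have h3 : ‖(1/3:ℂ)‖ = 1/3 := by norm_num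
    rw [h3] at hk
    nlinarith [hk]
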